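/- Let C ⊆ Mₙ(ℂ)⁺ be a closed convex cone, ρ a density matrix, and P the orthogonal projection onto the range of ρ. Then ρ is Birkhoff–James orthogonal in the trace norm to every member of C if and only if Tr(Pσ) ≤ 1/2 for every σ ∈ C with Tr(σ) = 1. -/

import Mathlib

open Matrix BigOperators

/-- The trace norm of a complex square matrix: the sum of its singular values. -/
noncomputable def traceNorm {m : Type*} [Fintype m] [DecidableEq m] (A : Matrix m m ℂ) : ℝ :=
  ∑ i, Real.sqrt ((Matrix.isHermitian_conjTranspose_mul_self A).eigenvalues i)

/-- The operator norm of a complex square matrix: its largest singular value. -/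
noncomputable def opNorm {m : Type*} [Fintype m] [DecidableEq m] (A : Matrix m m ℂ) : ℝ :=
  ⨆ i, Real.sqrt ((Matrix.isHermitian_conjTranspose_mul_self A).eigenvalues i)

/-- The orthogonal projection onto the strictly positive eigenspace of a Hermitian matrix. -/
noncomputable def posProj {n : ℕ} {H : Matrix (Fin n) (Fin n) ℂ} (hH : H.IsHermitian) :
    Matrix (Fin n) (Fin n) ℂ :=
  (hH.eigenvectorUnitary : Matrix (Fin n) (Fin n) ℂ) *
    Matrix.diagonal (fun i => if 0 < hH.eigenvalues i then (1 : ℂ) else 0) *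
    (star (hH.eigenvectorUnitary : Matrix (Fin n) (Fin n) ℂ))

/-- The orthogonal projection onto the strictly negative eigenspace of a Hermitian matrix. -/
noncomputable def negProj {n : ℕ} {H : Matrix (Fin n) (Fin n) ℂ} (hH : H.IsHermitian) :
    Matrix (Fin n) (Fin n) ℂ :=
  (hH.eigenvectorUnitary : Matrix (Fin n) (Fin n) ℂ) *
    Matrix.diagonal (fun i => if hH.eigenvalues i < 0 then (1 : ℂ) else 0) *
    (star (hH.eigenvectorUnitary : Matrix (Fin n) (Fin n) ℂ))

/-- The orthogonal projection onto the range of a Hermitian matrix. -/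
noncomputable def rangeProj {n : ℕ} {H : Matrix (Fin n) (Fin n) ℂ} (hH : H.IsHermitian) :
    Matrix (Fin n) (Fin n) ℂ :=
  (hH.eigenvectorUnitary : Matrix (Fin n) (Fin n) ℂ) *
    Matrix.diagonal (fun i => if hH.eigenvalues i ≠ 0 then (1 : ℂ) else 0) *
    (star (hH.eigenvectorUnitary : Matrix (Fin n) (Fin n) ℂ))

/-- `A` is Birkhoff–James orthogonal to `B` in the trace norm. -/
noncomputable def BJOrth {m : Type*} [Fintype m] [DecidableEq m] (A B : Matrix m m ℂ) : Prop :=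
  ∀ l : ℝ, traceNorm A ≤ traceNorm (A + (l : ℂ) • B)

/-- The principal submatrix of `A` indexed by the finite set `s`. -/
def principalSub {n : ℕ} (A : Matrix (Fin n) (Fin n) ℂ) (s : Finset (Fin n)) :
    Matrix {i // i ∈ s} {i // i ∈ s} ℂ :=
  A.submatrix (fun i => (i : Fin n)) (fun i => (i : Fin n))

open scoped ComplexOrder

/-!
Let `P` be the support projection of `ρ` and `Q = 1 - P`.

If `2 Tr(PX) ≤ Tr X`, the self-adjoint unitary `W = 2P - 1` fixes `ρ`, and the duality bound
`Re Tr(WA) ≤ ‖A‖₁` gives `‖ρ + lX‖₁ ≥ Tr ρ = ‖ρ‖₁` for `l < 0`; for `l ≥ 0` everything is positive.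

Conversely, let `σ ≥ 0` have trace one, and let `E` be the projection onto the negative part of
`ρ - tσ`, so that `‖ρ - tσ‖₁ = Tr ρ - t + 2 Re Tr(E(tσ - ρ))`. From `rP ≤ ρ` (with `r` the least
nonzero eigenvalue of `ρ`), `σ ≤ 1` and the pinching identity
`(r - t) t σ + cσc = (r - t) r PσP + t r QσQ` for `c = (r - t)P - tQ`, one gets
`(r - t) Re Tr(E(tσ - ρ)) ≤ t r Tr(Qσ)`. If `Tr(Pσ) > 1/2`, then `t = r (2 Tr(Pσ) - 1) / 2`
makes `‖ρ - tσ‖₁ < ‖ρ‖₁`.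
-/

open scoped MatrixOrder

variable {m : Type*} [Fintype m] [DecidableEq m]

-- As a `fun_prop` lemma this discharges the continuity side goals of the `cfc` API, so that it
-- applies to discontinuous functions such as indicators.
@[fun_prop]
lemma Matrix.continuousOn_spectrum_real (A : Matrix m m ℂ) (f : ℝ → ℝ) :
    ContinuousOn f (spectrum ℝ A) :=
  A.finite_real_spectrum.continuousOn f

lemma Matrix.IsHermitian.trace_cfc {A : Matrix m m ℂ} (hA : A.IsHermitian) (f : ℝ → ℝ) :
    (cfc f A).trace = ∑ i, (f (hA.eigenvalues i) : ℂ) := by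
  rw [hA.cfc_eq, IsHermitian.cfc, Unitary.conjStarAlgAut_apply, trace_mul_cycle,
    Unitary.coe_star_mul_self, one_mul, trace_diagonal]
  rfl

lemma Matrix.re_trace_mul_nonneg {A B : Matrix m m ℂ} (hA : 0 ≤ A) (hB : 0 ≤ B) :
    0 ≤ (A * B).trace.re := by
  obtain ⟨s, hs, rfl⟩ : ∃ s : Matrix m m ℂ, IsSelfAdjoint s ∧ A = s * s :=
    ⟨CFC.sqrt A, (CFC.sqrt_nonneg A).isSelfAdjoint, (CFC.sqrt_mul_sqrt_self A hA).symm⟩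
  have h := ((nonneg_iff_posSemidef.mp hB).conjTranspose_mul_mul_same s).trace_nonneg
  rw [← star_eq_conjTranspose, hs.star_eq, trace_mul_cycle] at h
  exact (Complex.nonneg_iff.mp h).1

lemma Matrix.re_trace_nonneg {A : Matrix m m ℂ} (hA : 0 ≤ A) : 0 ≤ A.trace.re := by
  simpa using re_trace_mul_nonneg (zero_le_one' (Matrix m m ℂ)) hA

lemma Matrix.IsHermitian.traceNorm_eq {A : Matrix m m ℂ} (hA : A.IsHermitian) :
    traceNorm A = ∑ i, |hA.eigenvalues i| := by
  have hsqrt : cfc Real.sqrt (Aᴴ * A) = cfc (|·| : ℝ → ℝ) A := by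
    rw [hA.eq, ← sq, ← cfc_pow_id (R := ℝ) A 2 hA.isSelfAdjoint,
      ← cfc_comp' Real.sqrt (· ^ 2) A ((A.finite_real_spectrum.image _).continuousOn _)]
    simp only [Real.sqrt_sq_eq_abs]
  have h := (isHermitian_conjTranspose_mul_self A).trace_cfc Real.sqrt
  rw [hsqrt, hA.trace_cfc] at h
  exact_mod_cast h.symm

lemma traceNorm_of_nonneg {A : Matrix m m ℂ} (hA : 0 ≤ A) : traceNorm A = A.trace.re := by
  have hA' := Matrix.nonneg_iff_posSemidef.mp hA
  rw [hA'.1.traceNorm_eq, hA'.1.trace_eq_sum_eigenvalues]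
  simp [abs_of_nonneg (hA'.eigenvalues_nonneg _)]

lemma Matrix.IsHermitian.re_trace_mul_le_traceNorm {A W : Matrix m m ℂ} (hA : A.IsHermitian)
    (hW₁ : -1 ≤ W) (hW₂ : W ≤ 1) : (W * A).trace.re ≤ traceNorm A := by
  set Ap := cfc (fun x : ℝ => max x 0) A
  set An := cfc (fun x : ℝ => max (-x) 0) A
  have hA_eq : A = Ap - An := by
    rw [← cfc_sub, ← cfc_id' ℝ A hA.isSelfAdjoint]
    simp only [max_zero_sub_max_neg_zero_eq_self, cfc_id' ℝ A hA.isSelfAdjoint]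
  have hnorm : traceNorm A = Ap.trace.re + An.trace.re := by
    simp only [Ap, An, hA.traceNorm_eq, hA.trace_cfc, Complex.re_sum, Complex.ofReal_re,
      ← Finset.sum_add_distrib, max_zero_add_max_neg_zero_eq_abs_self]
  have hpos : 0 ≤ ((1 - W) * Ap).trace.re :=
    re_trace_mul_nonneg (sub_nonneg.mpr hW₂) (cfc_nonneg fun x _ => le_max_right x 0)
  have hneg : 0 ≤ ((1 + W) * An).trace.re :=
    re_trace_mul_nonneg (neg_le_iff_add_nonneg'.mp hW₁)
      (cfc_nonneg fun x _ => le_max_right (-x) 0)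
  simp only [sub_mul, add_mul, one_mul, trace_sub, trace_add, Complex.sub_re,
    Complex.add_re] at hpos hneg
  rw [hnorm, hA_eq, mul_sub, trace_sub, Complex.sub_re]
  linarith

lemma Matrix.isStarProjection_cfc {A : Matrix m m ℂ} {f : ℝ → ℝ} (hf : ∀ x, f x * f x = f x) :
    IsStarProjection (cfc f A) :=
  ⟨by rw [IsIdempotentElem, ← cfc_mul]; simp only [hf], cfc_predicate f A⟩

lemma Matrix.IsHermitian.traceNorm_eq_re_trace_sub {A : Matrix m m ℂ} (hA : A.IsHermitian) :
    traceNorm A =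
      A.trace.re - 2 * (cfc (fun x : ℝ => if x < 0 then 1 else 0) A * A).trace.re := by
  have hEA : cfc (fun x : ℝ => if x < 0 then 1 else 0) A * A =
      cfc (fun x : ℝ => (if x < 0 then 1 else 0) * x) A := by
    rw [cfc_mul (fun x : ℝ => if x < 0 then 1 else 0) (fun x => x) A,
      cfc_id' ℝ A hA.isSelfAdjoint]
  rw [hEA, hA.traceNorm_eq, hA.trace_cfc, hA.trace_eq_sum_eigenvalues]
  simp only [Complex.re_sum, Complex.ofReal_re, Finset.mul_sum, ← Finset.sum_sub_distrib]
  refine Finset.sum_congr rfl fun i _ => ?_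
  rcases lt_or_ge (hA.eigenvalues i) 0 with h | h
  · simp [h, abs_of_neg h]; ring
  · simp [not_lt.mpr h, abs_of_nonneg h]

lemma rangeProj_eq_cfc {n : ℕ} {H : Matrix (Fin n) (Fin n) ℂ} (hH : H.IsHermitian) :
    rangeProj hH = cfc (fun x : ℝ => if x ≠ 0 then 1 else 0) H := by
  rw [hH.cfc_eq, Matrix.IsHermitian.cfc, Unitary.conjStarAlgAut_apply, rangeProj]
  congr 3 with i
  split_ifs <;> simp_all

lemma Matrix.cfc_support_mul_self {A : Matrix m m ℂ} (hA : IsSelfAdjoint A) :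
    cfc (fun x : ℝ => if x ≠ 0 then 1 else 0) A * A = A := by
  nth_rw 2 [← cfc_id' ℝ A hA]
  rw [← cfc_mul]
  nth_rw 2 [← cfc_id' ℝ A hA]
  exact cfc_congr fun x _ => by by_cases hx : x = 0 <;> simp [hx]

lemma Set.Finite.exists_pos_forall_le {s : Set ℝ} (hs : s.Finite) (hpos : ∀ x ∈ s, 0 < x) :
    ∃ r : ℝ, 0 < r ∧ ∀ x ∈ s, r ≤ x := by
  have h : ∀ᶠ r in nhdsWithin (0 : ℝ) (Set.Ioi 0), 0 < r ∧ ∀ x ∈ s, r ≤ x :=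
    eventually_mem_nhdsWithin.and <| (hs.eventually_all).2 fun x hx =>
      ((eventually_lt_nhds (hpos x hx)).filter_mono nhdsWithin_le_nhds).mono fun _ h => h.le
  exact h.exists

lemma Matrix.exists_pos_smul_cfc_support_le {A : Matrix m m ℂ} (hA : 0 ≤ A) :
    ∃ r : ℝ, 0 < r ∧ r • cfc (fun x : ℝ => if x ≠ 0 then 1 else 0) A ≤ A := by
  have hspec : ∀ x ∈ spectrum ℝ A, 0 ≤ x := fun x hx => spectrum_nonneg_of_nonneg hA hx
  obtain ⟨r, hr, hle⟩ := (A.finite_real_spectrum.sdiff (t := {0})).exists_pos_forall_le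
    fun x hx => (hspec x hx.1).lt_of_ne' hx.2
  refine ⟨r, hr, ?_⟩
  rw [← sub_nonneg, ← cfc_smul]
  nth_rw 1 [← cfc_id' ℝ A]
  rw [← cfc_sub]
  refine cfc_nonneg fun x hx => ?_
  by_cases hx0 : x = 0
  · simp [hx0]
  · simpa [hx0] using hle x ⟨hx, hx0⟩

lemma Matrix.le_one_of_trace_eq_one {σ : Matrix m m ℂ} (hσ : 0 ≤ σ) (htr : σ.trace = 1) :
    σ ≤ 1 := by
  have hσ' := nonneg_iff_posSemidef.mp hσ
  have hsum : ∑ j, hσ'.1.eigenvalues j = 1 := by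
    simpa [htr] using (congrArg Complex.re hσ'.1.trace_eq_sum_eigenvalues).symm
  rw [CFC.le_one_iff (R := ℝ) σ hσ.isSelfAdjoint, hσ'.1.spectrum_real_eq_range_eigenvalues]
  rintro _ ⟨i, rfl⟩
  exact hsum ▸ Finset.single_le_sum (fun j _ => hσ'.eigenvalues_nonneg j) (Finset.mem_univ i)

lemma smul_add_conj_eq_smul_add_smul {R : Type*} [Ring R] [Algebra ℝ R] (p x : R) (a b : ℝ) :
    (a * b) • x + (a • p - b • (1 - p)) * x * (a • p - b • (1 - p)) =
      (a * (a + b)) • (p * x * p) + (b * (a + b)) • ((1 - p) * x * (1 - p)) := by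
  simp only [sub_mul, mul_sub, smul_mul_assoc, mul_smul_comm, one_mul, mul_one, smul_sub,
    smul_smul]
  module

lemma IsStarProjection.mul_re_trace_mul_smul_sub_le {E P ρ σ : Matrix m m ℂ} {r t : ℝ}
    (hE : IsStarProjection E) (hP : IsStarProjection P) (hσ : 0 ≤ σ) (hσ₁ : σ ≤ 1)
    (hρ : r • P ≤ ρ) (ht : 0 ≤ t) (htr : t ≤ r) :
    (r - t) * (E * (t • σ - ρ)).trace.re ≤ t * r * ((1 - P) * σ).trace.re := by
  set c := (r - t) • P - t • (1 - P)
  have hc : IsSelfAdjoint c :=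
    ((IsSelfAdjoint.all (r - t)).smul hP.isSelfAdjoint).sub
      ((IsSelfAdjoint.all t).smul hP.one_sub.isSelfAdjoint)
  have hcross : 0 ≤ (E * (c * σ * c)).trace.re :=
    Matrix.re_trace_mul_nonneg hE.nonneg (hc.conjugate_nonneg hσ)
  have hpinch := congrArg (fun M => (E * M).trace.re)
    (smul_add_conj_eq_smul_add_smul P σ (r - t) t)
  simp only [mul_add, mul_smul_comm, Matrix.trace_add, Matrix.trace_smul, Complex.add_re,
    Complex.smul_re, smul_eq_mul, sub_add_cancel] at hpinch
  have hP_block : (E * (P * σ * P)).trace.re ≤ (E * P).trace.re := by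
    have h := Matrix.re_trace_mul_nonneg hE.nonneg
      (hP.isSelfAdjoint.conjugate_nonneg (sub_nonneg.mpr hσ₁))
    rw [mul_sub, sub_mul, mul_one, hP.isIdempotentElem.eq, mul_sub, Matrix.trace_sub,
      Complex.sub_re] at h
    linarith
  have hQ_block : (E * ((1 - P) * σ * (1 - P))).trace.re ≤ ((1 - P) * σ).trace.re := by
    have h := Matrix.re_trace_mul_nonneg hE.one_sub_nonneg
      (hP.one_sub.isSelfAdjoint.conjugate_nonneg hσ)
    rw [sub_mul, one_mul, Matrix.trace_sub, Complex.sub_re, Matrix.trace_mul_cycle,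
      hP.one_sub.isIdempotentElem.eq] at h
    linarith
  have hρ_block : r * (E * P).trace.re ≤ (E * ρ).trace.re := by
    have h := Matrix.re_trace_mul_nonneg hE.nonneg (sub_nonneg.mpr hρ)
    rw [mul_sub, Matrix.trace_sub, mul_smul_comm, Matrix.trace_smul, Complex.sub_re,
      Complex.smul_re, smul_eq_mul] at h
    linarith
  rw [mul_sub, Matrix.trace_sub, mul_smul_comm, Matrix.trace_smul, Complex.sub_re,
    Complex.smul_re, smul_eq_mul]
  nlinarith [mul_le_mul_of_nonneg_left hP_block (mul_nonneg (sub_nonneg.mpr htr) (ht.trans htr)),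
    mul_le_mul_of_nonneg_left hQ_block (mul_nonneg ht (ht.trans htr)),
    mul_le_mul_of_nonneg_left hρ_block (sub_nonneg.mpr htr)]

lemma IsStarProjection.re_trace_mul_le_half_of_bjOrth {P ρ σ : Matrix m m ℂ} {r : ℝ}
    (hP : IsStarProjection P) (hr : 0 < r) (hrρ : r • P ≤ ρ) (hρ : 0 ≤ ρ)
    (hσ : 0 ≤ σ) (hσtr : σ.trace = 1) (h : BJOrth ρ σ) : (P * σ).trace.re ≤ 1 / 2 := by
  by_contra! hgt
  have hQσ : ((1 - P) * σ).trace.re = 1 - (P * σ).trace.re := by simp [sub_mul, hσtr]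
  have hQσ₀ : 0 ≤ ((1 - P) * σ).trace.re := Matrix.re_trace_mul_nonneg hP.one_sub_nonneg hσ
  obtain ⟨t, ht_eq⟩ : ∃ t : ℝ, t = r * (2 * (P * σ).trace.re - 1) / 2 := ⟨_, rfl⟩
  have ht : 0 < t := by rw [ht_eq]; nlinarith
  have htr : t ≤ r := by rw [ht_eq]; nlinarith
  have hA : (ρ - t • σ).IsHermitian :=
    hρ.isSelfAdjoint.sub ((IsSelfAdjoint.all t).smul hσ.isSelfAdjoint)
  have hE : IsStarProjection (cfc (fun x : ℝ => if x < 0 then 1 else 0) (ρ - t • σ)) :=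
    Matrix.isStarProjection_cfc fun x => by split_ifs <;> norm_num
  have hBJ := h (-t)
  rw [Complex.ofReal_neg, neg_smul, Complex.coe_smul, ← sub_eq_add_neg, traceNorm_of_nonneg hρ,
    hA.traceNorm_eq_re_trace_sub, Matrix.trace_sub, Complex.sub_re, Matrix.trace_smul,
    Complex.smul_re, hσtr, Complex.one_re, smul_eq_mul, mul_one] at hBJ
  have key := hE.mul_re_trace_mul_smul_sub_le hP hσ (Matrix.le_one_of_trace_eq_one hσ hσtr) hrρ
    ht.le htr
  rw [← neg_sub ρ (t • σ), mul_neg, Matrix.trace_neg, Complex.neg_re, hQσ] at key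
  generalize (cfc (fun x : ℝ => if x < 0 then 1 else 0) (ρ - t • σ) * (ρ - t • σ)).trace.re = y
    at hBJ key
  have h₁ : t * ((r - t) / 2 - r * (1 - (P * σ).trace.re)) ≤ 0 := by
    nlinarith [mul_le_mul_of_nonneg_left (show t / 2 ≤ -y by linarith) (sub_nonneg.mpr htr)]
  have h₂ := nonpos_of_mul_nonpos_right h₁ ht
  rw [ht_eq] at h₂
  nlinarith

lemma IsStarProjection.bjOrth_of_two_mul_re_trace_le {P ρ X : Matrix m m ℂ}
    (hP : IsStarProjection P) (hPρ : P * ρ = ρ) (hρ : 0 ≤ ρ) (hX : 0 ≤ X)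
    (h : 2 * (P * X).trace.re ≤ X.trace.re) : BJOrth ρ X := by
  intro l
  have hA : (ρ + (l : ℂ) • X).IsHermitian := by
    rw [Complex.coe_smul]
    exact hρ.isSelfAdjoint.add ((IsSelfAdjoint.all l).smul hX.isSelfAdjoint)
  obtain ⟨W, hW₁, hW₂, hWρ, hWX⟩ : ∃ W : Matrix m m ℂ,
      -1 ≤ W ∧ W ≤ 1 ∧ W * ρ = ρ ∧ 0 ≤ l * (W * X).trace.re := by
    rcases le_or_gt 0 l with hl | hl
    · exact ⟨1, neg_le_self zero_le_one, le_rfl, one_mul ρ, by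
        simpa using mul_nonneg hl (Matrix.re_trace_nonneg hX)⟩
    · refine ⟨P + P - 1, ?_, ?_, ?_, ?_⟩
      · simpa using add_nonneg hP.nonneg hP.nonneg
      · simpa [sub_le_iff_le_add, one_add_one_eq_two] using add_le_add hP.le_one hP.le_one
      · rw [sub_mul, add_mul, hPρ, one_mul, add_sub_cancel_right]
      · refine mul_nonneg_of_nonpos_of_nonpos hl.le ?_
        rw [sub_mul, add_mul, one_mul, Matrix.trace_sub, Matrix.trace_add, Complex.sub_re,
          Complex.add_re]
        linarith
  calc traceNorm ρ = (W * (ρ + (l : ℂ) • X)).trace.re - l * (W * X).trace.re := by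
        rw [traceNorm_of_nonneg hρ, mul_add, hWρ, mul_smul_comm, Matrix.trace_add,
          Matrix.trace_smul, Complex.add_re, smul_eq_mul, Complex.re_ofReal_mul]
        ring
    _ ≤ traceNorm (ρ + (l : ℂ) • X) := by
        linarith [hA.re_trace_mul_le_traceNorm hW₁ hW₂]

lemma Matrix.two_mul_re_trace_mul_le_of_normalized {P X : Matrix m m ℂ} (hX : 0 ≤ X)
    (h : ∀ c : ℝ, 0 ≤ c → ((c : ℂ) • X).trace = 1 → (P * ((c : ℂ) • X)).trace.re ≤ 1 / 2) :
    2 * (P * X).trace.re ≤ X.trace.re := by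
  rcases eq_or_ne X 0 with rfl | hX0
  · simp
  have hX' := nonneg_iff_posSemidef.mp hX
  have htr : 0 < X.trace :=
    hX'.trace_nonneg.lt_of_ne (Ne.symm (mt hX'.trace_eq_zero_iff.mp hX0))
  obtain ⟨s, hs⟩ : ∃ s : ℝ, X.trace = s :=
    ⟨_, Complex.eq_re_of_ofReal_le (r := 0) (by simpa using htr.le)⟩
  have hspos : 0 < s := Complex.zero_lt_real.mp (hs ▸ htr)
  have hc := h s⁻¹ (inv_nonneg.mpr hspos.le) (by
    rw [Matrix.trace_smul, hs, smul_eq_mul, ← Complex.ofReal_mul, inv_mul_cancel₀ hspos.ne',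
      Complex.ofReal_one])
  rw [mul_smul_comm, Matrix.trace_smul, smul_eq_mul, Complex.re_ofReal_mul,
    inv_mul_le_iff₀ hspos] at hc
  rw [hs, Complex.ofReal_re]
  linarith

theorem stmt_15_general {n : ℕ} (C : Set (Matrix (Fin n) (Fin n) ℂ))
    (hCpsd : ∀ X ∈ C, X.PosSemidef)
    (hCsmul : ∀ X ∈ C, ∀ c : ℝ, 0 ≤ c → (c : ℂ) • X ∈ C)
    (ρ : Matrix (Fin n) (Fin n) ℂ) (hρ : ρ.PosSemidef) :
    (∀ X ∈ C, BJOrth ρ X) ↔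
      ∀ σ ∈ C, σ.trace = 1 → ((rangeProj hρ.1 * σ).trace).re ≤ 1 / 2 := by
  have hρ₀ : 0 ≤ ρ := Matrix.nonneg_iff_posSemidef.mpr hρ
  have hP : IsStarProjection (rangeProj hρ.1) := by
    rw [rangeProj_eq_cfc]
    exact Matrix.isStarProjection_cfc fun x => by split_ifs <;> norm_num
  constructor
  · intro h σ hσC hσtr
    obtain ⟨r, hr, hrρ⟩ := Matrix.exists_pos_smul_cfc_support_le hρ₀
    rw [← rangeProj_eq_cfc hρ.1] at hrρ
    exact hP.re_trace_mul_le_half_of_bjOrth hr hrρ hρ₀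
      (Matrix.nonneg_iff_posSemidef.mpr (hCpsd σ hσC)) hσtr (h σ hσC)
  · intro h X hXC
    have hX := Matrix.nonneg_iff_posSemidef.mpr (hCpsd X hXC)
    refine hP.bjOrth_of_two_mul_re_trace_le ?_ hρ₀ hX
      (Matrix.two_mul_re_trace_mul_le_of_normalized hX fun c hc htr =>
        h _ (hCsmul X hXC c hc) htr)
    rw [rangeProj_eq_cfc]
    exact Matrix.cfc_support_mul_self hρ.1.isSelfAdjoint

theorem stmt_15 {n : ℕ} (C : Set (Matrix (Fin n) (Fin n) ℂ))
    (hCpsd : ∀ X ∈ C, X.PosSemidef) (hCclosed : IsClosed C)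
    (hCadd : ∀ X ∈ C, ∀ Y ∈ C, X + Y ∈ C)
    (hCsmul : ∀ X ∈ C, ∀ c : ℝ, 0 ≤ c → (c : ℂ) • X ∈ C)
    (ρ : Matrix (Fin n) (Fin n) ℂ) (hρ : ρ.PosSemidef) (hρtr : ρ.trace = 1) :
    (∀ X ∈ C, BJOrth ρ X) ↔
      ∀ σ ∈ C, σ.trace = 1 → ((rangeProj hρ.1 * σ).trace).re ≤ 1 / 2 :=
  stmt_15_general C hCpsd hCsmul ρ hρ
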